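/- Let G be a vertex-weighted graph with positive weights, let v be a vertex with w(v) ≤ w(u) for all u ∈ N[v], and let G' be obtained from G by the modified weighted struction at v. If I is an independent set of G with v ∈ I, then I \ {v} is an independent set of G' and its weight in G' equals w(I) − w(v). -/

import Mathlib

/-!
Modified weighted struction: applied at a vertex `v` whose weight is minimum
in its closed neighborhood.  It removes `v`, lowers the weight of every
neighbor of `v` by `w v`, adds a new vertex `v_{x,y}` of weight `w y` for
every pair of non-adjacent neighbors `x < y` of `v`, connects every neighbor
`k` of `v` to every new vertex `v_{x,y}` with `x ≠ k`, and turns `N(v)` into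
a clique.
-/

open scoped Classical

variable {V : Type*}

/-- `I` is an independent set of `G`. -/
def IsIndep (G : SimpleGraph V) (I : Finset V) : Prop :=
  ∀ x ∈ I, ∀ y ∈ I, ¬ G.Adj x y

/-- The weighted independence number of `G` with weights `w`: the supremum
(for a finite graph, the maximum) of the weights of independent sets. -/
noncomputable def alphaW (G : SimpleGraph V) (w : V → ℝ) : ℝ :=
  sSup {r : ℝ | ∃ I : Finset V, IsIndep G I ∧ r = ∑ x ∈ I, w x}

/-- Old vertices of the struction at `v`: all vertices except `v`. -/
abbrev StrOld (v : V) : Type _ := {u : V // u ≠ v}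

/-- New vertices of the struction at `v`: pairs of non-adjacent neighbors
`x < y` of `v` (with respect to the fixed linear order on the vertices). -/
abbrev StrNew [LinearOrder V] (G : SimpleGraph V) (v : V) : Type _ :=
  {p : V × V // G.Adj v p.1 ∧ G.Adj v p.2 ∧ p.1 < p.2 ∧ ¬ G.Adj p.1 p.2}

/-- Adjacency for the modified weighted struction at `v`:
the edges of the original struction, plus an edge between each neighbor `k`
of `v` and each new vertex `v_{x,y}` with `x ≠ k`, plus all edges making
`N(v)` a clique. -/
def modRel [LinearOrder V] (G : SimpleGraph V) (v : V) :
    StrOld v ⊕ StrNew G v → StrOld v ⊕ StrNew G v → Prop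
  | Sum.inl u, Sum.inl u' => G.Adj u.val u'.val ∨ (G.Adj v u.val ∧ G.Adj v u'.val)
  | Sum.inl u, Sum.inr p =>
      G.Adj u.val p.val.1 ∨ G.Adj u.val p.val.2 ∨ (G.Adj v u.val ∧ u.val ≠ p.val.1)
  | Sum.inr p, Sum.inl u =>
      G.Adj u.val p.val.1 ∨ G.Adj u.val p.val.2 ∨ (G.Adj v u.val ∧ u.val ≠ p.val.1)
  | Sum.inr p, Sum.inr q => p.val.1 ≠ q.val.1 ∨ G.Adj p.val.2 q.val.2

/-- The graph obtained from `G` by the modified weighted struction at `v`. -/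
def modStruction [LinearOrder V] (G : SimpleGraph V) (v : V) :
    SimpleGraph (StrOld v ⊕ StrNew G v) :=
  SimpleGraph.fromRel (modRel G v)

/-- Weights after the modified struction: neighbors of `v` have their weight
lowered by `w v`, other old vertices keep their weight, and each new vertex
`v_{x,y}` has weight `w y`. -/
noncomputable def modWeight [LinearOrder V] (G : SimpleGraph V) (w : V → ℝ) (v : V) :
    StrOld v ⊕ StrNew G v → ℝ
  | Sum.inl u => if G.Adj v u.val then w u.val - w v else w u.val
  | Sum.inr p => w p.val.2

/-- if `I` is an independent set of `G` containing `v`, then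
`I \ {v}` (viewed inside the struction graph) is an independent set of the
modified struction graph `G'`, of weight `w(I) - w(v)` there. -/
theorem modified_struction_erase_center [Fintype V] [LinearOrder V]
    (G : SimpleGraph V) (w : V → ℝ) (hw : ∀ u, 0 < w u) (v : V)
    (hv : ∀ u, (u = v ∨ G.Adj v u) → w v ≤ w u)
    (I : Finset V) (hI : IsIndep G I) (hvI : v ∈ I) :
    IsIndep (modStruction G v)
        (Finset.univ.filter
          (Sum.elim (fun u : StrOld v => u.val ∈ I) (fun _ : StrNew G v => False))) ∧
      ∑ a ∈ Finset.univ.filter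
          (Sum.elim (fun u : StrOld v => u.val ∈ I) (fun _ : StrNew G v => False)),
          modWeight G w v a = (∑ x ∈ I, w x) - w v := by
  classical
  have hnadj : ∀ u ∈ I, ¬ G.Adj v u := fun u hu h => hI v hvI u hu h
  have hSeq : (Finset.univ.filter
          (Sum.elim (fun u : StrOld v => u.val ∈ I) (fun _ : StrNew G v => False)))
      = (I.erase v).attach.map
        ⟨fun x => Sum.inl ⟨x.val, Finset.ne_of_mem_erase x.2⟩,
         fun a b hab => by
           simp only [Sum.inl.injEq, Subtype.mk.injEq] at hab
           exact Subtype.ext hab⟩ := by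
    ext a
    rcases a with u | p
    · simp only [Finset.mem_filter, Finset.mem_univ, Sum.elim_inl, true_and,
        Finset.mem_map, Finset.mem_attach, Function.Embedding.coeFn_mk]
      constructor
      · intro hu
        exact ⟨⟨u.val, Finset.mem_erase.2 ⟨u.2, hu⟩⟩, rfl⟩
      · rintro ⟨x, hx⟩
        obtain rfl := Sum.inl.inj hx
        exact Finset.mem_of_mem_erase x.2
    · simp
  constructor
  · rintro a ha b hb hadj
    rw [hSeq] at ha hb
    simp only [Finset.mem_map, Finset.mem_attach, Function.Embedding.coeFn_mk,
      true_and] at ha hb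
    obtain ⟨x, -, rfl⟩ := ha
    obtain ⟨y, -, rfl⟩ := hb
    have hxI := Finset.mem_of_mem_erase x.2
    have hyI := Finset.mem_of_mem_erase y.2
    rw [modStruction, SimpleGraph.fromRel_adj] at hadj
    obtain ⟨-, h | h⟩ := hadj <;>
    · rcases h with h | ⟨h1, h2⟩
      · first
        | exact hI _ hxI _ hyI h
        | exact hI _ hyI _ hxI h
      · first
        | exact hnadj _ hxI h1
        | exact hnadj _ hyI h1
  · rw [hSeq, Finset.sum_map, ← Finset.sum_erase_eq_sub hvI,
        ← Finset.sum_attach (I.erase v) w]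
    refine Finset.sum_congr rfl fun x _ => ?_
    have hxI := Finset.mem_of_mem_erase x.2
    change modWeight G w v (Sum.inl ⟨x.val, Finset.ne_of_mem_erase x.2⟩) = w x.val
    simp [modWeight, hnadj _ hxI]
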